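/- Let G = (V, E) be a graph, and construct G' by adding for each v ∈ V and i ∈ [ℓ] a vertex z_{v,i}, plus vertices y, z, and edges e_0 = {y,z}, e_{v,i} = {z, z_{v,i}}, f_{v,i} = {z_{v,i}, v}, with ordering e_0 < E < {e_{v,i}} < {f_{v,i}}. Let M be the graphic matroid of G' truncated to rank ℓn + ⌊αn⌋ + 1 (n = |V|, α fixed) and τ = {e_{v,i}}. Then for every facet S of the link X_τ of the broken circuit complex: (a) the set {v : ∃i, f_{v,i} ∈ S} is an independent set of G, and (b) if f_{v,i}, f_{v,j} ∈ S then i = j. Conversely, for every independent set I of G with |I| = ⌊αn⌋ and every choice of indices i_v ∈ [ℓ] for v ∈ I, the set {f_{v,i_v} : v ∈ I} ∪ {e_0} is a facet of X_τ. -/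

import Mathlib

/-!
Forward direction. If `f_{u,i}, f_{v,j} ∈ B` and `uv ∈ E(G)`, then `u z_{u,i} z z_{v,j} v` is a
5-cycle whose smallest edge is `uv` (as `uv < e_{·,·} < f_{·,·}`); it contains a circuit through
`uv`, and the corresponding broken circuit lies in `B`. If `f_{v,i}, f_{v,j} ∈ B` with `i ≠ j`,
then `v z_{v,i} z z_{v,j}` is a 4-cycle in `B`.

Converse. `B = τ ∪ {e_0} ∪ {f_{v,i_v}}` is a tree hanging from `z` with `ℓn + |I| + 1` edges. Every
edge `e ∉ B` of `G'` can be exchanged for a smaller edge `b ∈ B` with `B - b + e` still a forest: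
`b = e_0` for an edge of `G` (one endpoint lies outside the independent set `I`, so it is a leaf
of `B + e`) and `b = e_{v,i}` for `f_{v,i}` (then `z_{v,i}` is a leaf). Such a `b` lies on every
circuit of `B + e` through `e`, so `e` is never the smallest element of a circuit `C` with
`C - e ⊆ B`: `B` contains no broken circuit.
-/

open SimpleGraph

section NBC

variable {W : Type*} [DecidableEq W]

def IsForestIn (H : SimpleGraph W) (S : Finset (Sym2 W)) : Prop :=
  ↑S ⊆ H.edgeSet ∧ (SimpleGraph.fromEdgeSet (↑S : Set (Sym2 W))).IsAcyclic

def IsGraphCircuit (H : SimpleGraph W) (C : Finset (Sym2 W)) : Prop :=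
  ↑C ⊆ H.edgeSet ∧ ¬ (SimpleGraph.fromEdgeSet (↑C : Set (Sym2 W))).IsAcyclic ∧
    ∀ e ∈ C, (SimpleGraph.fromEdgeSet (↑(C.erase e) : Set (Sym2 W))).IsAcyclic

def IsTruncCircuit (H : SimpleGraph W) (r' : ℕ) (C : Finset (Sym2 W)) : Prop :=
  IsGraphCircuit H C ∨ (IsForestIn H C ∧ C.card = r' + 1)

def TruncHasBrokenCircuit (H : SimpleGraph W) (r' : ℕ) (ord : Sym2 W → ℕ)
    (S : Finset (Sym2 W)) : Prop :=
  ∃ C e, IsTruncCircuit H r' C ∧ e ∈ C ∧ (∀ f ∈ C, f ≠ e → ord e < ord f) ∧ C.erase e ⊆ S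

def IsTruncNBCBasis (H : SimpleGraph W) (r' : ℕ) (ord : Sym2 W → ℕ)
    (B : Finset (Sym2 W)) : Prop :=
  IsForestIn H B ∧ B.card = r' ∧ ¬ TruncHasBrokenCircuit H r' ord B

end NBC

section Construction

/-- Vertices of `G'`: `Sum.inl v` = vertex `v` of `G`, `Sum.inr (Sum.inl (v, i))` = `z_{v,i}`,
`Sum.inr (Sum.inr true)` = `y`, `Sum.inr (Sum.inr false)` = `z`. -/
abbrev Wc (V : Type*) : Type _ := V ⊕ (V × ℕ) ⊕ Bool

variable {V : Type*} [Fintype V] [DecidableEq V]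

def yc : Wc V := Sum.inr (Sum.inr true)
def zc : Wc V := Sum.inr (Sum.inr false)
def e0c : Sym2 (Wc V) := s(yc, zc)
def eC (v : V) (i : ℕ) : Sym2 (Wc V) := s(zc, Sum.inr (Sum.inl (v, i)))
def fC (v : V) (i : ℕ) : Sym2 (Wc V) := s(Sum.inr (Sum.inl (v, i)), Sum.inl v)

/-- The graph `G'` obtained from `G` by adding `y, z`, the `z_{v,i}` for `i ∈ [ℓ]`, and the
edges `e_0 = {y,z}`, `e_{v,i} = {z, z_{v,i}}`, `f_{v,i} = {z_{v,i}, v}`. -/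
def Gc (G : SimpleGraph V) (ℓ : ℕ) : SimpleGraph (Wc V) :=
  G.map Sum.inl ⊔
    SimpleGraph.fromEdgeSet
      ({e0c} ∪ {x | ∃ v : V, ∃ i < ℓ, x = eC v i ∨ x = fC v i})

/-- The face `τ = {e_{v,i} : v ∈ V, i ∈ [ℓ]}`. -/
def tauC (ℓ : ℕ) : Finset (Sym2 (Wc V)) :=
  ((Finset.univ : Finset V) ×ˢ Finset.range ℓ).image fun p => eC p.1 p.2

/-- An edge ordering of `G'` compatible with `e_0 < E < {e_{v,i}} < {f_{v,i}}`. -/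
def OrdOKc (G : SimpleGraph V) (ℓ : ℕ) (ord : Sym2 (Wc V) → ℕ) : Prop :=
  Function.Injective ord ∧
  (∀ a b : V, G.Adj a b → ord e0c < ord s(Sum.inl a, Sum.inl b)) ∧
  (∀ a b : V, G.Adj a b → ∀ v : V, ∀ i < ℓ, ord s(Sum.inl a, Sum.inl b) < ord (eC v i)) ∧
  (∀ v : V, ∀ i < ℓ, ∀ u : V, ∀ j < ℓ, ord (eC v i) < ord (fC u j))

end Construction

namespace SimpleGraph

variable {W : Type*}

theorem isAcyclic_fromEdgeSet_of_parent (S : Set (Sym2 W)) (par : W → W) (h : W → ℕ)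
    (hS : ∀ e ∈ S, ∃ a, e = s(a, par a) ∧ h (par a) < h a) :
    (fromEdgeSet S).IsAcyclic := by
  classical
  have hadj : ∀ a b, (fromEdgeSet S).Adj a b → h b ≤ h a → par a = b := by
    intro a b hab hba
    obtain ⟨c, hc, hlt⟩ := hS _ ((fromEdgeSet_adj S).mp hab).1
    rcases Sym2.eq_iff.mp hc with ⟨rfl, rfl⟩ | ⟨rfl, rfl⟩ <;> first | rfl | omega
  intro v p hp
  obtain ⟨u, hu, hmax⟩ := p.support.toFinset.exists_max_image h ⟨v, by simp⟩
  rw [List.mem_toFinset] at hu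
  have hq := (Walk.isCycle_rotate hu).mpr hp
  have hle : ∀ x ∈ (p.rotate u hu).support, h x ≤ h u := fun x hx =>
    hmax x (List.mem_toFinset.mpr ((Walk.mem_support_rotate_iff _ _ _).mp hx))
  -- the highest vertex of the cycle has two distinct lower neighbours, both its parent
  apply hq.snd_ne_penultimate
  rw [← hadj _ _ (Walk.adj_snd hq.not_nil) (hle _ (Walk.getVert_mem_support _ _)),
    ← hadj _ _ (Walk.adj_penultimate hq.not_nil).symm (hle _ (Walk.getVert_mem_support _ _))]

theorem isAcyclic_fromEdgeSet_insert {S : Set (Sym2 W)} (hS : (fromEdgeSet S).IsAcyclic)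
    {x y : W} (hxy : x ≠ y) (hx : ∀ e ∈ S, x ∉ e) :
    (fromEdgeSet (insert s(x, y) S)).IsAcyclic := by
  have hreach : ¬ (fromEdgeSet S).Reachable x y := by
    rintro ⟨p⟩
    have hnil : ¬ p.Nil := fun hp => hxy hp.eq
    exact hx _ ((fromEdgeSet_adj S).mp (p.adj_snd hnil)).1 (Sym2.mem_mk_left _ _)
  rw [Set.insert_eq, fromEdgeSet_union, sup_comm, ← edge]
  exact hS.sup_edge_of_not_reachable hreach

theorem not_isAcyclic_fromEdgeSet_insert_of_reachable {T : Set (Sym2 W)} {x y : W}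
    (hxy : x ≠ y) (hT : s(x, y) ∉ T) (hreach : (fromEdgeSet T).Reachable x y) :
    ¬ (fromEdgeSet (insert s(x, y) T)).IsAcyclic := by
  rw [Set.insert_eq, fromEdgeSet_union, sup_comm, ← edge, isAcyclic_sup_fromEdgeSet_iff]
  rintro ⟨-, h⟩
  rcases h hreach with h | h
  exacts [hxy h, hT ((fromEdgeSet_adj T).mp h).1]

end SimpleGraph

section BrokenCircuits

variable {W : Type*} [DecidableEq W] {H : SimpleGraph W}

theorem exists_isGraphCircuit_subset {S : Finset (Sym2 W)} (hSH : ↑S ⊆ H.edgeSet)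
    (hS : ¬ (fromEdgeSet (↑S : Set (Sym2 W))).IsAcyclic) :
    ∃ C ⊆ S, IsGraphCircuit H C := by
  obtain ⟨C, hCS, hC⟩ := exists_minimal_le_of_wellFoundedLT
    (fun C : Finset (Sym2 W) => ¬ (fromEdgeSet (↑C : Set (Sym2 W))).IsAcyclic) S hS
  refine ⟨C, hCS, (Finset.coe_subset.mpr hCS).trans hSH, hC.prop, fun e he => ?_⟩
  exact not_not.mp (hC.not_prop_of_lt (Finset.erase_ssubset he))

theorem truncHasBrokenCircuit_of_not_isAcyclic {r' : ℕ} {ord : Sym2 W → ℕ}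
    {B S : Finset (Sym2 W)} {e : Sym2 W} (hB : (fromEdgeSet (↑B : Set (Sym2 W))).IsAcyclic)
    (hSH : ↑S ⊆ H.edgeSet) (hS : ¬ (fromEdgeSet (↑S : Set (Sym2 W))).IsAcyclic)
    (he : ∀ f ∈ S, f ≠ e → ord e < ord f) (hSB : S.erase e ⊆ B) :
    TruncHasBrokenCircuit H r' ord B := by
  obtain ⟨C, hCS, hC⟩ := exists_isGraphCircuit_subset hSH hS
  have heC : e ∈ C := by
    by_contra heC
    have hCB : C ⊆ B := (Finset.subset_erase.mpr ⟨hCS, heC⟩).trans hSB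
    exact hC.2.1 (hB.anti (fromEdgeSet_mono (Finset.coe_subset.mpr hCB)))
  exact ⟨C, e, Or.inl hC, heC, fun f hf => he f (hCS hf),
    (Finset.erase_subset_erase e hCS).trans hSB⟩

theorem not_truncHasBrokenCircuit_of_exchange {r' : ℕ} {ord : Sym2 W → ℕ}
    {B : Finset (Sym2 W)} (hB : (fromEdgeSet (↑B : Set (Sym2 W))).IsAcyclic) (hcard : B.card = r')
    (hexch : ∀ e ∈ H.edgeSet, e ∉ B → ∃ b ∈ B, ord b < ord e ∧
      (fromEdgeSet (↑(insert e (B.erase b)) : Set (Sym2 W))).IsAcyclic) :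
    ¬ TruncHasBrokenCircuit H r' ord B := by
  rintro ⟨C, e, hC, heC, hmin, hCB⟩
  have hCeB : C ⊆ insert e B := fun f hf => by
    by_cases hfe : f = e
    · exact hfe ▸ Finset.mem_insert_self e B
    · exact Finset.mem_insert_of_mem (hCB (Finset.mem_erase.mpr ⟨hfe, hf⟩))
  have heH : e ∈ H.edgeSet := by
    rcases hC with hC | hC
    exacts [hC.1 heC, hC.1.1 heC]
  by_cases heB : e ∈ B
  · rw [Finset.insert_eq_of_mem heB] at hCeB
    rcases hC with hC | ⟨-, hCcard⟩
    · exact hC.2.1 (hB.anti (fromEdgeSet_mono (Finset.coe_subset.mpr hCeB)))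
    · have := Finset.card_le_card hCeB
      omega
  obtain ⟨b, hbB, hbe, hacyc⟩ := hexch e heH heB
  have hbC : b ∈ C := by
    rcases hC with hC | ⟨-, hCcard⟩
    · by_contra hbC
      have hCsub : C ⊆ insert e (B.erase b) := by
        rw [← Finset.erase_insert_of_ne fun heb : e = b => heB (heb ▸ hbB)]
        exact Finset.subset_erase.mpr ⟨hCeB, hbC⟩
      exact hC.2.1 (hacyc.anti (fromEdgeSet_mono (Finset.coe_subset.mpr hCsub)))
    · have hEq : C.erase e = B := Finset.eq_of_subset_of_card_le hCB (by
        rw [Finset.card_erase_of_mem heC]; omega)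
      exact Finset.mem_of_mem_erase (hEq ▸ hbB)
  have := hmin b hbC (fun hbe' => heB (hbe' ▸ hbB))
  omega

end BrokenCircuits

section Construction

variable {V : Type*}

abbrev zC (v : V) (i : ℕ) : Wc V := Sum.inr (Sum.inl (v, i))

theorem mem_edgeSet_Gc {G : SimpleGraph V} {ℓ : ℕ} {e : Sym2 (Wc V)} :
    e ∈ (Gc G ℓ).edgeSet ↔
      (∃ a b, G.Adj a b ∧ e = s(Sum.inl a, Sum.inl b)) ∨ e = e0c ∨
        ∃ v : V, ∃ i < ℓ, e = eC v i ∨ e = fC v i := by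
  induction e using Sym2.ind with
  | _ x y =>
  rw [Gc, edgeSet_sup, Set.mem_union, edgeSet_fromEdgeSet, Set.mem_sdiff, Set.mem_union,
    Set.mem_singleton_iff, mem_edgeSet, map_adj']
  constructor
  · rintro (⟨-, a, b, hab, rfl, rfl⟩ | ⟨h, -⟩)
    exacts [Or.inl ⟨a, b, hab, rfl⟩, Or.inr h]
  · rintro (⟨a, b, hab, he⟩ | h)
    · have hne : (Sum.inl a : Wc V) ≠ Sum.inl b := by simpa using hab.ne
      obtain ⟨rfl, rfl⟩ | ⟨rfl, rfl⟩ := Sym2.eq_iff.mp he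
      exacts [Or.inl ⟨hne, a, b, hab, rfl, rfl⟩, Or.inl ⟨hne.symm, b, a, hab.symm, rfl, rfl⟩]
    · refine Or.inr ⟨h, ?_⟩
      rcases h with h | ⟨v, i, -, h | h⟩ <;> rw [h] <;> simp [e0c, eC, fC, yc, zc]

theorem eC_mem_edgeSet_Gc {G : SimpleGraph V} {ℓ : ℕ} {v : V} {i : ℕ} (hi : i < ℓ) :
    eC v i ∈ (Gc G ℓ).edgeSet :=
  mem_edgeSet_Gc.mpr (Or.inr (Or.inr ⟨v, i, hi, Or.inl rfl⟩))

theorem fC_mem_edgeSet_Gc {G : SimpleGraph V} {ℓ : ℕ} {v : V} {i : ℕ} (hi : i < ℓ) :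
    fC v i ∈ (Gc G ℓ).edgeSet :=
  mem_edgeSet_Gc.mpr (Or.inr (Or.inr ⟨v, i, hi, Or.inr rfl⟩))

theorem fC_inj {v u : V} {i j : ℕ} : fC v i = fC u j ↔ v = u ∧ i = j := by
  simp only [fC, Sym2.eq_iff]
  aesop

theorem eC_inj {v u : V} {i j : ℕ} : eC v i = eC u j ↔ v = u ∧ i = j := by
  simp [eC, zc]

theorem eC_ne_fC {v u : V} {i j : ℕ} : eC v i ≠ fC u j := by
  simp [eC, fC, zc]

theorem e0c_ne_eC {v : V} {i : ℕ} : e0c ≠ eC v i := by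
  simp [e0c, eC, zc, yc]

theorem e0c_ne_fC {v : V} {i : ℕ} : e0c ≠ fC v i := by
  simp [e0c, fC, zc, yc]

theorem fromEdgeSet_reachable_inl_zc {T : Set (Sym2 (Wc V))} {v : V} {i : ℕ}
    (hf : fC v i ∈ T) (he : eC v i ∈ T) :
    (fromEdgeSet T).Reachable (Sum.inl v) zc := by
  have hvz : (fromEdgeSet T).Adj (Sum.inl v) (zC v i) :=
    (fromEdgeSet_adj T).mpr ⟨Sym2.eq_swap ▸ hf, by simp⟩
  have hzz : (fromEdgeSet T).Adj (zC v i) zc :=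
    (fromEdgeSet_adj T).mpr ⟨Sym2.eq_swap ▸ he, by simp [zc]⟩
  exact hvz.reachable.trans hzz.reachable

variable [Fintype V] [DecidableEq V] {G : SimpleGraph V} {ℓ : ℕ}

theorem mem_tauC {e : Sym2 (Wc V)} : e ∈ tauC (V := V) ℓ ↔ ∃ v : V, ∃ i < ℓ, e = eC v i := by
  simp [tauC, eq_comm]

theorem card_tauC : (tauC (V := V) ℓ).card = ℓ * Fintype.card V := by
  rw [tauC, Finset.card_image_of_injective _ fun p q h => Prod.ext_iff.mpr (eC_inj.mp h),
    Finset.card_product, Finset.card_univ, Finset.card_range, mul_comm]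

theorem eq_of_fC_mem_of_fC_mem {B : Finset (Sym2 (Wc V))}
    (hB : (fromEdgeSet (↑B : Set (Sym2 (Wc V)))).IsAcyclic) (hτ : tauC ℓ ⊆ B) {v : V}
    {i j : ℕ} (hi : i < ℓ) (hj : j < ℓ) (hfi : fC v i ∈ B) (hfj : fC v j ∈ B) : i = j := by
  by_contra hij
  -- otherwise `v, z_{v,i}, z, z_{v,j}` is a 4-cycle in `B`
  have hzz : (fromEdgeSet {fC v i, eC v i, eC v j}).Adj (zC v j) zc :=
    (fromEdgeSet_adj _).mpr ⟨by simp [eC, Sym2.eq_swap], by simp [zc]⟩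
  have hzv := hzz.reachable.trans
    (fromEdgeSet_reachable_inl_zc (v := v) (i := i) (by simp) (by simp)).symm
  refine not_isAcyclic_fromEdgeSet_insert_of_reachable (by simp) ?_ hzv (hB.anti ?_)
  · simpa [fC, eC, zc] using Ne.symm hij
  · refine fromEdgeSet_mono ?_
    simp only [Set.insert_subset_iff, Set.singleton_subset_iff, Finset.mem_coe]
    exact ⟨hfj, hfi, hτ (mem_tauC.mpr ⟨v, i, hi, rfl⟩), hτ (mem_tauC.mpr ⟨v, j, hj, rfl⟩)⟩

theorem not_adj_of_fC_mem_of_fC_mem {r' : ℕ} {ord : Sym2 (Wc V) → ℕ} (hord : OrdOKc G ℓ ord)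
    {B : Finset (Sym2 (Wc V))} (hB : (fromEdgeSet (↑B : Set (Sym2 (Wc V)))).IsAcyclic)
    (hτ : tauC ℓ ⊆ B) (hnbc : ¬ TruncHasBrokenCircuit (Gc G ℓ) r' ord B) {u v : V} {i j : ℕ}
    (hi : i < ℓ) (hj : j < ℓ) (hfi : fC u i ∈ B) (hfj : fC v j ∈ B) : ¬ G.Adj u v := by
  intro hadj
  -- the 5-cycle `u, z_{u,i}, z, z_{v,j}, v` has `uv` as its smallest edge
  set T : Finset (Sym2 (Wc V)) := {fC u i, eC u i, eC v j, fC v j}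
  have huvT : s(Sum.inl u, Sum.inl v) ∉ T := by simp [T, fC, eC, zc]
  have hreach : (fromEdgeSet (↑T : Set (Sym2 (Wc V)))).Reachable (Sum.inl u) (Sum.inl v) :=
    (fromEdgeSet_reachable_inl_zc (i := i) (by simp [T]) (by simp [T])).trans
      (fromEdgeSet_reachable_inl_zc (i := j) (by simp [T]) (by simp [T])).symm
  have hTB : T ⊆ B := by
    simp only [T, Finset.insert_subset_iff, Finset.singleton_subset_iff]
    exact ⟨hfi, hτ (mem_tauC.mpr ⟨u, i, hi, rfl⟩), hτ (mem_tauC.mpr ⟨v, j, hj, rfl⟩), hfj⟩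
  refine hnbc (truncHasBrokenCircuit_of_not_isAcyclic (e := s(Sum.inl u, Sum.inl v)) hB ?_ ?_ ?_
    ((Finset.erase_insert huvT).trans_subset hTB))
  · simp only [T, Finset.coe_insert, Finset.coe_singleton, Set.insert_subset_iff,
      Set.singleton_subset_iff]
    exact ⟨mem_edgeSet_Gc.mpr (Or.inl ⟨u, v, hadj, rfl⟩), fC_mem_edgeSet_Gc hi,
      eC_mem_edgeSet_Gc hi, eC_mem_edgeSet_Gc hj, fC_mem_edgeSet_Gc hj⟩
  · rw [Finset.coe_insert]
    exact not_isAcyclic_fromEdgeSet_insert_of_reachable (by simpa using hadj.ne) huvT hreach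
  · have hui := hord.2.2.1 u v hadj u i hi
    have hvj := hord.2.2.1 u v hadj v j hj
    simp only [T, Finset.mem_insert, Finset.mem_singleton]
    rintro f (rfl | rfl | rfl | rfl | rfl) hf
    exacts [absurd rfl hf, hui.trans (hord.2.2.2 u i hi u i hi), hui, hvj,
      hvj.trans (hord.2.2.2 v j hj v j hj)]

def basisC (ℓ : ℕ) (I : Finset V) (idx : V → ℕ) : Finset (Sym2 (Wc V)) :=
  tauC ℓ ∪ insert e0c (I.image fun v => fC v (idx v))

variable {I : Finset V} {idx : V → ℕ}

theorem mem_basisC {e : Sym2 (Wc V)} :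
    e ∈ basisC ℓ I idx ↔ (∃ v, ∃ i < ℓ, e = eC v i) ∨ e = e0c ∨ ∃ v ∈ I, e = fC v (idx v) := by
  simp only [basisC, Finset.mem_union, Finset.mem_insert, Finset.mem_image, mem_tauC, eq_comm]

theorem card_basisC : (basisC ℓ I idx).card = ℓ * Fintype.card V + I.card + 1 := by
  have hdisj : Disjoint (tauC ℓ) (insert e0c (I.image fun v => fC v (idx v))) := by
    simp only [Finset.disjoint_left, mem_tauC, Finset.mem_insert, Finset.mem_image]
    rintro _ ⟨v, i, -, rfl⟩ (h | ⟨u, -, h⟩)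
    exacts [e0c_ne_eC h.symm, eC_ne_fC h.symm]
  have he0 : e0c ∉ I.image fun v => fC v (idx v) := by
    simp only [Finset.mem_image, not_exists, not_and]
    exact fun v _ h => e0c_ne_fC h.symm
  rw [basisC, Finset.card_union_of_disjoint hdisj, Finset.card_insert_of_notMem he0,
    Finset.card_image_of_injective _ fun u v h => (fC_inj.mp h).1, card_tauC, add_assoc]

theorem coe_basisC_subset_edgeSet (hidx : ∀ v ∈ I, idx v < ℓ) :
    ↑(basisC ℓ I idx) ⊆ (Gc G ℓ).edgeSet := by
  intro e he
  rcases mem_basisC.mp he with ⟨v, i, hi, rfl⟩ | rfl | ⟨v, hv, rfl⟩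
  exacts [eC_mem_edgeSet_Gc hi, mem_edgeSet_Gc.mpr (Or.inr (Or.inl rfl)),
    fC_mem_edgeSet_Gc (hidx v hv)]

theorem isAcyclic_basisC :
    (fromEdgeSet (↑(basisC ℓ I idx) : Set (Sym2 (Wc V)))).IsAcyclic := by
  -- a tree rooted at `z`: `y` and the `z_{v,i}` hang from `z`, and `v ∈ I` from `z_{v,idx v}`
  refine isAcyclic_fromEdgeSet_of_parent _
    (Sum.elim (fun v => zC v (idx v)) fun _ => zc)
    (Sum.elim (fun _ => 2) (Sum.elim (fun _ => 1) fun b => if b then 1 else 0)) fun e he => ?_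
  rcases mem_basisC.mp he with ⟨v, i, -, rfl⟩ | rfl | ⟨v, -, rfl⟩
  · exact ⟨zC v i, Sym2.eq_swap, by simp [zc]⟩
  · exact ⟨yc, rfl, by simp [yc, zc]⟩
  · exact ⟨Sum.inl v, Sym2.eq_swap, by simp⟩

theorem inl_notMem_of_mem_basisC {a : V} (ha : a ∉ I) {e : Sym2 (Wc V)}
    (he : e ∈ basisC ℓ I idx) : Sum.inl a ∉ e := by
  rcases mem_basisC.mp he with ⟨v, i, -, rfl⟩ | rfl | ⟨v, hv, rfl⟩
  · simp [eC, zc]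
  · simp [e0c, yc, zc]
  · simp only [fC, Sym2.mem_iff, reduceCtorEq, Sum.inl.injEq, false_or]
    rintro rfl
    exact ha hv

theorem zC_notMem_of_mem_basisC_erase {v : V} {i : ℕ} (hf : fC v i ∉ basisC ℓ I idx)
    {e : Sym2 (Wc V)} (he : e ∈ (basisC ℓ I idx).erase (eC v i)) : zC v i ∉ e := by
  obtain ⟨hne, he⟩ := Finset.mem_erase.mp he
  rcases mem_basisC.mp he with ⟨w, k, -, rfl⟩ | rfl | ⟨w, hw, rfl⟩
  · simp only [eC, zc, Sym2.mem_iff, reduceCtorEq, Sum.inr.injEq, Sum.inl.injEq, false_or]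
    rintro ⟨rfl, rfl⟩
    exact hne rfl
  · simp [e0c, yc, zc]
  · simp only [fC, Sym2.mem_iff, reduceCtorEq, Sum.inr.injEq, Sum.inl.injEq, or_false]
    rintro ⟨rfl, rfl⟩
    exact hf (mem_basisC.mpr (Or.inr (Or.inr ⟨_, hw, rfl⟩)))

theorem exists_exchange_of_notMem_basisC {ord : Sym2 (Wc V) → ℕ} (hord : OrdOKc G ℓ ord)
    (hI : G.IsIndepSet ↑I) {e : Sym2 (Wc V)} (he : e ∈ (Gc G ℓ).edgeSet)
    (heB : e ∉ basisC ℓ I idx) : ∃ b ∈ basisC ℓ I idx, ord b < ord e ∧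
      (fromEdgeSet (↑(insert e ((basisC ℓ I idx).erase b)) : Set (Sym2 (Wc V)))).IsAcyclic := by
  have hB : (fromEdgeSet (↑(basisC ℓ I idx) : Set (Sym2 (Wc V)))).IsAcyclic := isAcyclic_basisC
  rcases mem_edgeSet_Gc.mp he with ⟨a, b, hab, rfl⟩ | rfl | ⟨v, i, hi, rfl | rfl⟩
  · -- an endpoint outside the independent set `I` is a leaf
    have hleaf : ∀ a b : V, G.Adj a b → a ∉ I → (fromEdgeSet (↑(insert s(Sum.inl a, Sum.inl b)
        ((basisC ℓ I idx).erase e0c)) : Set (Sym2 (Wc V)))).IsAcyclic := by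
      intro a b hab ha
      rw [Finset.coe_insert]
      refine isAcyclic_fromEdgeSet_insert (hB.anti (fromEdgeSet_mono ?_)) (by simpa using hab.ne)
        fun e he => inl_notMem_of_mem_basisC ha (Finset.mem_of_mem_erase he)
      exact Finset.coe_subset.mpr (Finset.erase_subset _ _)
    refine ⟨e0c, mem_basisC.mpr (Or.inr (Or.inl rfl)), hord.2.1 a b hab, ?_⟩
    by_cases ha : a ∈ I
    · have hb : b ∉ I := fun hb => hI ha hb hab.ne hab
      rw [Sym2.eq_swap]
      exact hleaf b a hab.symm hb
    · exact hleaf a b hab ha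
  · exact absurd (mem_basisC.mpr (Or.inr (Or.inl rfl))) heB
  · exact absurd (mem_basisC.mpr (Or.inl ⟨v, i, hi, rfl⟩)) heB
  · -- `z_{v,i}` is a leaf once `e_{v,i}` is removed
    refine ⟨eC v i, mem_basisC.mpr (Or.inl ⟨v, i, hi, rfl⟩), hord.2.2.2 v i hi v i hi, ?_⟩
    rw [Finset.coe_insert]
    refine isAcyclic_fromEdgeSet_insert (hB.anti (fromEdgeSet_mono ?_)) (by simp)
      fun e he => zC_notMem_of_mem_basisC_erase heB he
    exact Finset.coe_subset.mpr (Finset.erase_subset _ _)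

theorem isTruncNBCBasis_basisC {ord : Sym2 (Wc V) → ℕ} (hord : OrdOKc G ℓ ord)
    (hI : G.IsIndepSet ↑I) (hidx : ∀ v ∈ I, idx v < ℓ) :
    IsTruncNBCBasis (Gc G ℓ) (ℓ * Fintype.card V + I.card + 1) ord (basisC ℓ I idx) :=
  ⟨⟨coe_basisC_subset_edgeSet hidx, isAcyclic_basisC⟩, card_basisC,
    not_truncHasBrokenCircuit_of_exchange isAcyclic_basisC card_basisC
      fun _ he heB => exists_exchange_of_notMem_basisC hord hI he heB⟩

end Construction

theorem link_facets_of_general_construction_general {V : Type*} [Fintype V] [DecidableEq V]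
    (G : SimpleGraph V) (α : ℝ) (ℓ : ℕ)
    (ord : Sym2 (Wc V) → ℕ) (hord : OrdOKc G ℓ ord) :
    (∀ B : Finset (Sym2 (Wc V)),
      IsTruncNBCBasis (Gc G ℓ) (ℓ * Fintype.card V + ⌊α * Fintype.card V⌋₊ + 1) ord B →
      tauC ℓ ⊆ B →
        (∀ u v : V, (∃ i < ℓ, fC u i ∈ B) → (∃ j < ℓ, fC v j ∈ B) → u ≠ v → ¬ G.Adj u v) ∧
        (∀ v : V, ∀ i < ℓ, ∀ j < ℓ, fC v i ∈ B → fC v j ∈ B → i = j)) ∧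
    (∀ I : Finset V, (∀ u ∈ I, ∀ v ∈ I, u ≠ v → ¬ G.Adj u v) →
      I.card = ⌊α * Fintype.card V⌋₊ → ∀ idx : V → ℕ, (∀ v ∈ I, idx v < ℓ) →
      IsTruncNBCBasis (Gc G ℓ) (ℓ * Fintype.card V + ⌊α * Fintype.card V⌋₊ + 1) ord
        (tauC ℓ ∪ insert e0c (I.image fun v => fC v (idx v)))) := by
  refine ⟨fun B hB hτ => ?_, fun I hI hIcard idx hidx => ?_⟩
  · obtain ⟨⟨-, hBac⟩, -, hnbc⟩ := hB
    exact ⟨fun u v ⟨i, hi, hfi⟩ ⟨j, hj, hfj⟩ _ =>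
        not_adj_of_fC_mem_of_fC_mem hord hBac hτ hnbc hi hj hfi hfj,
      fun v i hi j hj => eq_of_fC_mem_of_fC_mem hBac hτ hi hj⟩
  · exact hIcard ▸ isTruncNBCBasis_basisC hord hI hidx

/-- Structure of the facets of the link of `τ` in the broken circuit complex of the graphic
matroid of `G'` truncated to rank `ℓn + ⌊αn⌋ + 1` (facets of `X_τ` = NBC bases `B ⊇ τ`):
(a) the vertices `v` with some `f_{v,i} ∈ B` form an independent set of `G`; (b) at most one
index `i` per vertex is used. Conversely, each independent set `I` of size `⌊αn⌋` and each
choice of indices `i_v ∈ [ℓ]` yields the facet `{f_{v,i_v} : v ∈ I} ∪ {e_0}` of `X_τ`. -/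
theorem link_facets_of_general_construction {V : Type*} [Fintype V] [DecidableEq V]
    (G : SimpleGraph V) (α : ℝ) (hα : 0 < α) (ℓ : ℕ) (hℓ : 1 ≤ ℓ)
    (ord : Sym2 (Wc V) → ℕ) (hord : OrdOKc G ℓ ord) :
    (∀ B : Finset (Sym2 (Wc V)),
      IsTruncNBCBasis (Gc G ℓ) (ℓ * Fintype.card V + ⌊α * Fintype.card V⌋₊ + 1) ord B →
      tauC ℓ ⊆ B →
        (∀ u v : V, (∃ i < ℓ, fC u i ∈ B) → (∃ j < ℓ, fC v j ∈ B) → u ≠ v → ¬ G.Adj u v) ∧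
        (∀ v : V, ∀ i < ℓ, ∀ j < ℓ, fC v i ∈ B → fC v j ∈ B → i = j)) ∧
    (∀ I : Finset V, (∀ u ∈ I, ∀ v ∈ I, u ≠ v → ¬ G.Adj u v) →
      I.card = ⌊α * Fintype.card V⌋₊ → ∀ idx : V → ℕ, (∀ v ∈ I, idx v < ℓ) →
      IsTruncNBCBasis (Gc G ℓ) (ℓ * Fintype.card V + ⌊α * Fintype.card V⌋₊ + 1) ord
        (tauC ℓ ∪ insert e0c (I.image fun v => fC v (idx v)))) :=
  link_facets_of_general_construction_general G α ℓ ord hord
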